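/- Let $k$ be an uncountable algebraically closed field, $A$ an abelian variety over $k$, $K \subseteq A$ a subgroup which is a countable union of Zariski closed subsets, and $A_0$ the abelian subvariety given by the component of $K$ through $0$. If $K = \bigcup_{n} K_n$ is the irredundant decomposition, then for every $x \in K$ there exists $n$ with $x + A_0 = K_n$; in particular each $c$-component of $K$ is a translate of $A_0$. -/

import Mathlib

/-!
Over an uncountable algebraically closed field an irreducible closed subset `W` of projective
space covered by countably many closed sets lies in one of them. Otherwise each covering set `D`
satisfies a homogeneous equation `g_D` that does not vanish on `W`; products of the `g_D` still
do not vanish on `W` by irreducibility, and since every residue field of a countable-dimensional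
`k`-algebra is `k`, there is a point of `W` where no `g_D` vanishes, which is absurd.

Consequently every irreducible closed subset of `K` lies in one component. Translation by
`x ∈ K` sends components into components, and irredundancy makes it permute them. Two
components through `0` coincide, both being contained in the component containing their sum.
So a component `C ∋ x` is `x + ((-x) + C) = x + A₀`.
-/

open MvPolynomial

/-- Projective `n`-space over `k`, modeled as the projectivization of `k^(n+1)`. -/
abbrev ProjSpace (k : Type) [Field k] (n : ℕ) : Type :=
  Projectivization k (Fin (n + 1) → k)

/-- Zariski closed subsets of projective space: common zero loci of sets of
homogeneous polynomials. -/
def ProjClosed (k : Type) [Field k] {n : ℕ} (C : Set (ProjSpace k n)) : Prop :=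
  ∃ S : Set (MvPolynomial (Fin (n + 1)) k),
    (∀ f ∈ S, ∃ d, MvPolynomial.IsHomogeneous f d) ∧
    C = {x | ∀ f ∈ S, ∀ (v : Fin (n + 1) → k) (hv : v ≠ 0),
          Projectivization.mk k v hv = x → MvPolynomial.eval v f = 0}

variable {α : Type*}

/-- `W` is a Zariski closed subset of the variety `V`, where `zc` is the
ambient Zariski-closedness predicate. -/
def ClosedIn (zc : Set α → Prop) (V W : Set α) : Prop :=
  W ⊆ V ∧ ∃ C, zc C ∧ W = V ∩ C

/-- `U` is a Zariski open subset of `V`. -/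
def OpenIn (zc : Set α → Prop) (V U : Set α) : Prop :=
  ∃ W, ClosedIn zc V W ∧ U = V \ W

/-- `S ⊆ V` is irreducible. -/
def IrredIn (zc : Set α → Prop) (V S : Set α) : Prop :=
  S.Nonempty ∧ ∀ W₁ W₂, ClosedIn zc V W₁ → ClosedIn zc V W₂ →
    S ⊆ W₁ ∪ W₂ → S ⊆ W₁ ∨ S ⊆ W₂

/-- `W` is an irreducible Zariski closed subset of `V`. -/
def IrredClosedIn (zc : Set α → Prop) (V W : Set α) : Prop :=
  ClosedIn zc V W ∧ IrredIn zc V W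

/-- `W ⊆ V` is c-closed: a countable union of irreducible Zariski closed subsets. -/
def CClosedIn (zc : Set α → Prop) (V W : Set α) : Prop :=
  ∃ 𝒞 : Set (Set α), 𝒞.Countable ∧ (∀ C ∈ 𝒞, IrredClosedIn zc V C) ∧ W = ⋃₀ 𝒞

/-- `U ⊆ V` is c-open: the complement in `V` of a c-closed subset. -/
def COpenIn (zc : Set α → Prop) (V U : Set α) : Prop :=
  ∃ W, CClosedIn zc V W ∧ U = V \ W

/-- A quasi-projective variety: an irreducible Zariski locally closed subset
of projective space. -/
def IsQuasiProjectiveVariety (k : Type) [Field k] {n : ℕ} (V : Set (ProjSpace k n)) : Prop :=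
  (∃ C₁ C₂, ProjClosed k C₁ ∧ ProjClosed k C₂ ∧ V = C₁ \ C₂) ∧
    IrredIn (ProjClosed k) Set.univ V

/-- A model of an abelian variety over `k`: a projective irreducible group
variety, together with the regularity/completeness properties of its group
operations used in this paper. -/
structure AbelianVariety (k : Type) [Field k] (n : ℕ) where
  carrier : Set (ProjSpace k n)
  carrier_closed : ProjClosed k carrier
  carrier_irred : IrredIn (ProjClosed k) Set.univ carrier
  zero : ProjSpace k n
  zero_mem : zero ∈ carrier
  add : ProjSpace k n → ProjSpace k n → ProjSpace k n
  neg : ProjSpace k n → ProjSpace k n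
  add_mem : ∀ {x y}, x ∈ carrier → y ∈ carrier → add x y ∈ carrier
  neg_mem : ∀ {x}, x ∈ carrier → neg x ∈ carrier
  add_comm : ∀ x ∈ carrier, ∀ y ∈ carrier, add x y = add y x
  add_assoc : ∀ x ∈ carrier, ∀ y ∈ carrier, ∀ z ∈ carrier,
    add (add x y) z = add x (add y z)
  zero_add : ∀ x ∈ carrier, add zero x = x
  neg_add_cancel : ∀ x ∈ carrier, add (neg x) x = zero
  /-- points are Zariski closed (and trivially irreducible) -/
  singleton_closed : ∀ x ∈ carrier, IrredClosedIn (ProjClosed k) carrier {x}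
  /-- regularity and completeness: the image of a product of irreducible
  Zariski closed subsets under addition is irreducible Zariski closed -/
  image2_add_closed : ∀ W₁ W₂, IrredClosedIn (ProjClosed k) carrier W₁ →
    IrredClosedIn (ProjClosed k) carrier W₂ →
    IrredClosedIn (ProjClosed k) carrier (Set.image2 add W₁ W₂)
  /-- regularity of the inverse: the image of an irreducible Zariski closed
  subset under negation is irreducible Zariski closed -/
  image_neg_closed : ∀ W, IrredClosedIn (ProjClosed k) carrier W →
    IrredClosedIn (ProjClosed k) carrier (neg '' W)

namespace AbelianVariety

variable {k : Type} [Field k] {n : ℕ} (A : AbelianVariety k n)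

/-- Zariski closed subsets of the abelian variety `A`. -/
def ZClosed (W : Set (ProjSpace k n)) : Prop :=
  ClosedIn (ProjClosed k) A.carrier W

/-- Irreducible Zariski closed subsets of `A`. -/
def ZClosedIrred (W : Set (ProjSpace k n)) : Prop :=
  IrredClosedIn (ProjClosed k) A.carrier W

/-- `K` is a subgroup of the group of closed points of `A`. -/
def IsSubgroupSet (K : Set (ProjSpace k n)) : Prop :=
  K ⊆ A.carrier ∧ A.zero ∈ K ∧ (∀ x ∈ K, ∀ y ∈ K, A.add x y ∈ K) ∧ ∀ x ∈ K, A.neg x ∈ K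

/-- `K` is a countable union of Zariski closed subsets of `A`. -/
def IsCClosed (K : Set (ProjSpace k n)) : Prop :=
  ∃ 𝒞 : Set (Set (ProjSpace k n)), 𝒞.Countable ∧ (∀ C ∈ 𝒞, A.ZClosed C) ∧ K = ⋃₀ 𝒞

/-- `𝒞` is an irredundant decomposition of `K`: a countable collection of
irreducible Zariski closed subsets, none contained in another, with union `K`. -/
def IsIrredundantDecomp (K : Set (ProjSpace k n)) (𝒞 : Set (Set (ProjSpace k n))) : Prop :=
  𝒞.Countable ∧ (∀ C ∈ 𝒞, A.ZClosedIrred C) ∧ K = ⋃₀ 𝒞 ∧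
    ∀ C ∈ 𝒞, ∀ D ∈ 𝒞, C ⊆ D → C = D

/-- An abelian subvariety: an irreducible Zariski closed subgroup. -/
def IsAbelianSubvariety (B : Set (ProjSpace k n)) : Prop :=
  A.ZClosedIrred B ∧ A.IsSubgroupSet B

/-- The translate `x + W` of a subset `W` of `A`. -/
def translate (x : ProjSpace k n) (W : Set (ProjSpace k n)) : Set (ProjSpace k n) :=
  A.add x '' W

end AbelianVariety

open Cardinal

section UncountableNullstellensatz

variable {k : Type*} [Field k]

theorem Submonoid.countable_closure {M : Type*} [Monoid M] {G : Set M} (hG : G.Countable) :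
    (Submonoid.closure G : Set M).Countable := by
  have : Countable G := hG.to_subtype
  rw [Submonoid.closure_eq_mrange]
  exact Set.countable_range _

theorem MvPolynomial.rank_le_aleph0 {σ : Type*} [Countable σ] :
    Module.rank k (MvPolynomial σ k) ≤ ℵ₀ := by
  rw [MvPolynomial.rank_eq_lift, lift_le_aleph0]
  exact mk_le_aleph0

theorem rank_localization_le_aleph0 {R : Type*} [CommRing R] [Algebra k R]
    (hR : Module.rank k R ≤ ℵ₀) {S : Submonoid R} (hS : (S : Set R).Countable) :
    Module.rank k (Localization S) ≤ ℵ₀ := by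
  have : Countable S := hS.to_subtype
  let f : (S →₀ R) →ₗ[k] Localization S := Finsupp.lsum k fun s =>
    (LinearMap.mulRight k (IsLocalization.mk' (Localization S) (1 : R) s)).comp
      (IsScalarTower.toAlgHom k R (Localization S)).toLinearMap
  have hf : Function.Surjective f := by
    intro x
    obtain ⟨⟨r, s⟩, rfl⟩ := IsLocalization.mk'_surjective S x
    refine ⟨Finsupp.single s r, ?_⟩
    simp [f, ← IsLocalization.mk'_eq_mul_mk'_one]
  calc Module.rank k (Localization S) ≤ Module.rank k (S →₀ R) := f.rank_le_of_surjective hf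
    _ = #S * Module.rank k R := by rw [rank_finsupp, lift_id, lift_id]
    _ ≤ ℵ₀ * ℵ₀ := mul_le_mul' mk_le_aleph0 hR
    _ = ℵ₀ := aleph0_mul_aleph0

theorem algebraMap_bijective_of_rank_le_aleph0 [IsAlgClosed k] [Uncountable k]
    {F : Type*} [Field F] [Algebra k F] (hF : Module.rank k F ≤ ℵ₀) :
    Function.Bijective (algebraMap k F) := by
  have : Algebra.IsAlgebraic k F := by
    refine ⟨fun x => by_contra fun hx => not_countable (α := k) ?_⟩
    have := (show Transcendental k x from hx).linearIndependent_sub_inv.cardinal_lift_le_rank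
      |>.trans (lift_le_aleph0.2 hF)
    rwa [lift_le_aleph0, mk_le_aleph0_iff] at this
  exact IsAlgClosed.algebraMap_bijective_of_isIntegral

/-- Uncountable Nullstellensatz: the residue fields of the localization at `S` have countable
dimension over `k`, hence are `k` itself. -/
theorem exists_algHom_of_disjoint [IsAlgClosed k] [Uncountable k] {R : Type*} [CommRing R]
    [Algebra k R] (hR : Module.rank k R ≤ ℵ₀) {I : Ideal R} {S : Submonoid R}
    (hS : (S : Set R).Countable) (hIS : Disjoint (I : Set R) S) :
    ∃ ψ : R →ₐ[k] k, (∀ r ∈ I, ψ r = 0) ∧ ∀ s ∈ S, ψ s ≠ 0 := by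
  obtain ⟨P, hP, hIP, hPS⟩ := Ideal.exists_le_prime_disjoint I S hIS
  have hPmap := IsLocalization.isPrime_of_isPrime_disjoint S (Localization S) P hP hPS.symm
  obtain ⟨m, hm, hPm⟩ := Ideal.exists_le_maximal _ hPmap.ne_top
  let := Ideal.Quotient.field m
  let π : R →ₐ[k] Localization S ⧸ m :=
    (Ideal.Quotient.mkₐ k m).comp (IsScalarTower.toAlgHom k R (Localization S))
  have hF : Module.rank k (Localization S ⧸ m) ≤ ℵ₀ :=
    ((Ideal.Quotient.mkₐ k m).toLinearMap.rank_le_of_surjective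
      (Ideal.Quotient.mkₐ_surjective k m)).trans (rank_localization_le_aleph0 hR hS)
  let e := AlgEquiv.ofBijective (Algebra.ofId k _) (algebraMap_bijective_of_rank_le_aleph0 hF)
  refine ⟨e.symm.toAlgHom.comp π, fun r hr => ?_, fun s hs => ?_⟩
  · have : π r = 0 := Ideal.Quotient.eq_zero_iff_mem.2 (hPm (Ideal.mem_map_of_mem _ (hIP hr)))
    simp [this]
  · have : IsUnit (π s) :=
      (IsLocalization.map_units (Localization S) (⟨s, hs⟩ : S)).map (Ideal.Quotient.mkₐ k m)
    simpa using this.ne_zero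

end UncountableNullstellensatz

theorem MvPolynomial.IsHomogeneous.eval_smul {σ R : Type*} [CommSemiring R]
    {f : MvPolynomial σ R} {d : ℕ} (hf : f.IsHomogeneous d) (c : R) (v : σ → R) :
    eval (c • v) f = c ^ d * eval v f := by
  classical
  rw [eval_eq, eval_eq, Finset.mul_sum]
  refine Finset.sum_congr rfl fun m hm => ?_
  have hdeg : m.degree = d := by
    rw [Finsupp.degree_eq_weight_one]; exact hf (mem_support_iff.mp hm)
  rw [← hdeg, Finsupp.degree_apply]
  simp only [Pi.smul_apply, smul_eq_mul, mul_pow]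
  rw [Finset.prod_mul_distrib, Finset.prod_pow_eq_pow_sum]
  ring

section ProjectiveBaire

variable {k : Type} [Field k] {n : ℕ}

def projZeroLocus (S : Set (MvPolynomial (Fin (n + 1)) k)) : Set (ProjSpace k n) :=
  {x | ∀ f ∈ S, ∀ (v : Fin (n + 1) → k) (hv : v ≠ 0),
    Projectivization.mk k v hv = x → eval v f = 0}

def affineCone (W : Set (ProjSpace k n)) : Set (Fin (n + 1) → k) :=
  {v | ∃ hv : v ≠ 0, Projectivization.mk k v hv ∈ W}

theorem rep_mem_affineCone {W : Set (ProjSpace k n)} {x : ProjSpace k n} (hx : x ∈ W) :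
    x.rep ∈ affineCone W :=
  ⟨x.rep_nonzero, by rwa [Projectivization.mk_rep]⟩

theorem mk_mem_projZeroLocus {S : Set (MvPolynomial (Fin (n + 1)) k)}
    (hS : ∀ f ∈ S, ∃ d, f.IsHomogeneous d) {v : Fin (n + 1) → k} (hv : v ≠ 0)
    (h : ∀ f ∈ S, eval v f = 0) : Projectivization.mk k v hv ∈ projZeroLocus S := by
  intro f hf w hw hwv
  obtain ⟨d, hd⟩ := hS f hf
  obtain ⟨a, rfl⟩ := (Projectivization.mk_eq_mk_iff' k w v hw hv).mp hwv
  rw [hd.eval_smul, h f hf, mul_zero]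

theorem ProjClosed.inter {C₁ C₂ : Set (ProjSpace k n)} (h₁ : ProjClosed k C₁)
    (h₂ : ProjClosed k C₂) : ProjClosed k (C₁ ∩ C₂) := by
  obtain ⟨S₁, hS₁, rfl⟩ := h₁
  obtain ⟨S₂, hS₂, rfl⟩ := h₂
  refine ⟨S₁ ∪ S₂, fun f hf => hf.elim (hS₁ f) (hS₂ f), ?_⟩
  ext x
  simp only [Set.mem_inter_iff, Set.mem_ofPred_eq, Set.mem_union, or_imp, forall_and]

theorem ProjClosed.exists_homogeneous_mem_vanishingIdeal_of_notMem {W : Set (ProjSpace k n)}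
    (hW : ProjClosed k W) {x : ProjSpace k n} (hx : x ∉ W) :
    ∃ g : MvPolynomial (Fin (n + 1)) k, (∃ d, g.IsHomogeneous d) ∧
      g ∈ vanishingIdeal k (affineCone W) ∧ eval x.rep g ≠ 0 := by
  obtain ⟨S, hS, rfl⟩ := hW
  simp only [Set.mem_ofPred_eq, not_forall] at hx
  obtain ⟨g, hg, v, hv, hvx, hgv⟩ := hx
  refine ⟨g, hS g hg, fun w ⟨hw, hwW⟩ => hwW g hg w hw rfl, fun h => hgv ?_⟩
  obtain ⟨d, hd⟩ := hS g hg
  obtain ⟨a, rfl⟩ := (Projectivization.mk_eq_mk_iff' k _ _ hv x.rep_nonzero).mp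
    (hvx.trans x.mk_rep.symm)
  rw [hd.eval_smul, h, mul_zero]

theorem exists_X_notMem_vanishingIdeal {W : Set (ProjSpace k n)} (hW : W.Nonempty) :
    ∃ j, (X j : MvPolynomial (Fin (n + 1)) k) ∉ vanishingIdeal k (affineCone W) := by
  obtain ⟨x, hx⟩ := hW
  obtain ⟨j, hj⟩ := Function.ne_iff.mp x.rep_nonzero
  exact ⟨j, fun h => hj (by simpa using h _ (rep_mem_affineCone hx))⟩

theorem IrredIn.homogeneous_mem_or_mem {V W : Set (ProjSpace k n)} (hWV : W ⊆ V)
    (hW : IrredIn (ProjClosed k) V W) {f g : MvPolynomial (Fin (n + 1)) k} {d e : ℕ}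
    (hf : f.IsHomogeneous d) (hg : g.IsHomogeneous e)
    (hfg : f * g ∈ vanishingIdeal k (affineCone W)) :
    f ∈ vanishingIdeal k (affineCone W) ∨ g ∈ vanishingIdeal k (affineCone W) := by
  have hZ : ∀ {h : MvPolynomial (Fin (n + 1)) k} {m : ℕ}, h.IsHomogeneous m →
      ClosedIn (ProjClosed k) V (V ∩ projZeroLocus {h}) := fun hd =>
    ⟨Set.inter_subset_left, _, ⟨{_}, by simpa using ⟨_, hd⟩, rfl⟩, rfl⟩
  have hmem : ∀ {x : ProjSpace k n} {h : MvPolynomial (Fin (n + 1)) k} {m : ℕ},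
      h.IsHomogeneous m → eval x.rep h = 0 → x ∈ projZeroLocus {h} := by
    intro x h m hd hx
    rw [← x.mk_rep]
    exact mk_mem_projZeroLocus (by simpa using ⟨_, hd⟩) _ (by simpa using hx)
  have hcover : W ⊆ (V ∩ projZeroLocus {f}) ∪ (V ∩ projZeroLocus {g}) := by
    intro x hx
    have hx0 : eval x.rep f * eval x.rep g = 0 := by
      simpa using hfg _ (rep_mem_affineCone hx)
    exact (mul_eq_zero.mp hx0).imp (fun h => ⟨hWV hx, hmem hf h⟩)
      (fun h => ⟨hWV hx, hmem hg h⟩)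
  refine (hW.2 _ _ (hZ hf) (hZ hg) hcover).imp ?_ ?_ <;>
    exact fun h v ⟨hv, hvW⟩ => (h hvW).2 _ rfl v hv rfl

theorem IrredIn.disjoint_vanishingIdeal_closure {V W : Set (ProjSpace k n)} (hWV : W ⊆ V)
    (hW : IrredIn (ProjClosed k) V W) {G : Set (MvPolynomial (Fin (n + 1)) k)}
    (hG : ∀ g ∈ G, (∃ d, g.IsHomogeneous d) ∧ g ∉ vanishingIdeal k (affineCone W)) :
    Disjoint (vanishingIdeal k (affineCone W) : Set (MvPolynomial (Fin (n + 1)) k))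
      (Submonoid.closure G) := by
  have key : ∀ s ∈ Submonoid.closure G,
      (∃ d, s.IsHomogeneous d) ∧ s ∉ vanishingIdeal k (affineCone W) := by
    intro s hs
    induction hs using Submonoid.closure_induction with
    | mem g hg => exact hG g hg
    | one =>
      obtain ⟨x, hx⟩ := hW.1
      exact ⟨⟨0, isHomogeneous_one _ _⟩, fun h => by simpa using h _ (rep_mem_affineCone hx)⟩
    | mul a b _ _ ha hb =>
      obtain ⟨⟨d, hd⟩, ha⟩ := ha
      obtain ⟨⟨e, he⟩, hb⟩ := hb
      exact ⟨⟨_, hd.mul he⟩, fun h => (hW.homogeneous_mem_or_mem hWV hd he h).elim ha hb⟩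
  exact Set.disjoint_right.2 fun s hs => (key s hs).2

theorem IrredIn.exists_subset_of_subset_sUnion [IsAlgClosed k] [Uncountable k]
    {V W : Set (ProjSpace k n)} (hWc : ProjClosed k W) (hWV : W ⊆ V)
    (hW : IrredIn (ProjClosed k) V W) {𝒟 : Set (Set (ProjSpace k n))} (h𝒟 : 𝒟.Countable)
    (hcl : ∀ D ∈ 𝒟, ProjClosed k D) (hcov : W ⊆ ⋃₀ 𝒟) : ∃ D ∈ 𝒟, W ⊆ D := by
  by_contra! hcon
  have hsep : ∀ D : 𝒟, ∃ g : MvPolynomial (Fin (n + 1)) k,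
      g ∈ vanishingIdeal k (affineCone (D : Set (ProjSpace k n))) ∧
      (∃ d, g.IsHomogeneous d) ∧ g ∉ vanishingIdeal k (affineCone W) := by
    rintro ⟨D, hD⟩
    obtain ⟨x, hxW, hxD⟩ := Set.not_subset.mp (hcon D hD)
    obtain ⟨g, hg, hgD, hgx⟩ := (hcl D hD).exists_homogeneous_mem_vanishingIdeal_of_notMem hxD
    exact ⟨g, hgD, hg, fun h => hgx (h _ (rep_mem_affineCone hxW))⟩
  choose g hgD hgW using hsep
  obtain ⟨j, hj⟩ := exists_X_notMem_vanishingIdeal hW.1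
  have : Countable 𝒟 := h𝒟.to_subtype
  set S := Submonoid.closure (insert (X j) (Set.range g))
  have hSW :
      Disjoint (vanishingIdeal k (affineCone W) : Set (MvPolynomial (Fin (n + 1)) k)) S :=
    hW.disjoint_vanishingIdeal_closure hWV <| by
      rintro _ (rfl | ⟨D, rfl⟩)
      exacts [⟨⟨1, isHomogeneous_X _ _⟩, hj⟩, hgW D]
  obtain ⟨T, hT, hWT⟩ := hWc
  have hTW : Ideal.span T ≤ vanishingIdeal k (affineCone W) :=
    Ideal.span_le.2 fun f hf v ⟨hv, hvW⟩ => (hWT ▸ hvW) f hf v hv rfl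
  obtain ⟨ψ, hψT, hψS⟩ := exists_algHom_of_disjoint MvPolynomial.rank_le_aleph0
    (Submonoid.countable_closure ((Set.countable_range g).insert _)) (hSW.mono_left hTW)
  set p : Fin (n + 1) → k := ψ ∘ X
  have hψ : ∀ f, ψ f = eval p f := fun f => DFunLike.congr_fun (aeval_unique ψ) f
  have hp : p ≠ 0 := fun h =>
    hψS _ (Submonoid.subset_closure (Set.mem_insert _ _)) (by simp [hψ, h])
  have hpW : Projectivization.mk k p hp ∈ W :=
    hWT ▸ mk_mem_projZeroLocus hT hp fun f hf =>
      (hψ f).symm.trans (hψT f (Ideal.subset_span hf))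
  obtain ⟨D, hD, hpD⟩ := hcov hpW
  exact hψS _ (Submonoid.subset_closure (Set.mem_insert_of_mem _ ⟨⟨D, hD⟩, rfl⟩))
    ((hψ _).trans (hgD ⟨D, hD⟩ p ⟨hp, hpD⟩))

end ProjectiveBaire

namespace AbelianVariety

variable {k : Type} [Field k] {n : ℕ} (A : AbelianVariety k n)

theorem add_zero {x : ProjSpace k n} (hx : x ∈ A.carrier) : A.add x A.zero = x := by
  rw [A.add_comm x hx _ A.zero_mem, A.zero_add x hx]

theorem neg_add_add_cancel {x y : ProjSpace k n} (hx : x ∈ A.carrier) (hy : y ∈ A.carrier) :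
    A.add (A.neg x) (A.add x y) = y := by
  rw [← A.add_assoc _ (A.neg_mem hx) x hx y hy, A.neg_add_cancel x hx, A.zero_add y hy]

theorem add_neg_add_cancel {x y : ProjSpace k n} (hx : x ∈ A.carrier) (hy : y ∈ A.carrier) :
    A.add x (A.add (A.neg x) y) = y := by
  rw [← A.add_assoc x hx _ (A.neg_mem hx) y hy, A.add_comm x hx _ (A.neg_mem hx),
    A.neg_add_cancel x hx, A.zero_add y hy]

theorem translate_neg_translate {x : ProjSpace k n} (hx : x ∈ A.carrier)
    {W : Set (ProjSpace k n)} (hW : W ⊆ A.carrier) :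
    A.translate (A.neg x) (A.translate x W) = W := by
  simp only [translate, Set.image_image]
  exact (Set.image_congr fun y hy => A.neg_add_add_cancel hx (hW hy)).trans (Set.image_id' W)

theorem translate_translate_neg {x : ProjSpace k n} (hx : x ∈ A.carrier)
    {W : Set (ProjSpace k n)} (hW : W ⊆ A.carrier) :
    A.translate x (A.translate (A.neg x) W) = W := by
  simp only [translate, Set.image_image]
  exact (Set.image_congr fun y hy => A.add_neg_add_cancel hx (hW hy)).trans (Set.image_id' W)

variable {A}

theorem ZClosed.projClosed {W : Set (ProjSpace k n)} (hW : A.ZClosed W) :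
    ProjClosed k W := by
  obtain ⟨-, C, hC, rfl⟩ := hW
  exact A.carrier_closed.inter hC

theorem ZClosedIrred.translate {W : Set (ProjSpace k n)}
    (hW : A.ZClosedIrred W) {x : ProjSpace k n} (hx : x ∈ A.carrier) :
    A.ZClosedIrred (A.translate x W) := by
  rw [AbelianVariety.translate, ← Set.image2_singleton_left]
  exact A.image2_add_closed _ _ (A.singleton_closed x hx) hW

theorem IsSubgroupSet.translate_subset {K : Set (ProjSpace k n)}
    (hK : A.IsSubgroupSet K) {x : ProjSpace k n} (hx : x ∈ K) {W : Set (ProjSpace k n)}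
    (hW : W ⊆ K) : A.translate x W ⊆ K := by
  rintro _ ⟨w, hw, rfl⟩
  exact hK.2.2.1 x hx w (hW hw)

section IrredundantDecomp

variable {K : Set (ProjSpace k n)} {𝒞 : Set (Set (ProjSpace k n))}

theorem IsIrredundantDecomp.subset_of_mem (hdec : A.IsIrredundantDecomp K 𝒞)
    {C : Set (ProjSpace k n)} (hC : C ∈ 𝒞) : C ⊆ K :=
  hdec.2.2.1 ▸ Set.subset_sUnion_of_mem hC

theorem IsIrredundantDecomp.exists_mem_superset [IsAlgClosed k] [Uncountable k]
    (hdec : A.IsIrredundantDecomp K 𝒞) {W : Set (ProjSpace k n)} (hW : A.ZClosedIrred W)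
    (hWK : W ⊆ K) : ∃ C ∈ 𝒞, W ⊆ C :=
  hW.2.exists_subset_of_subset_sUnion (ZClosed.projClosed hW.1) hW.1.1 hdec.1
    (fun C hC => ZClosed.projClosed (hdec.2.1 C hC).1) (hdec.2.2.1 ▸ hWK)

theorem IsIrredundantDecomp.translate_mem [IsAlgClosed k] [Uncountable k]
    (hK : A.IsSubgroupSet K) (hdec : A.IsIrredundantDecomp K 𝒞) {x : ProjSpace k n}
    (hx : x ∈ K) {C : Set (ProjSpace k n)} (hC : C ∈ 𝒞) : A.translate x C ∈ 𝒞 := by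
  have hxA := hK.1 hx
  have hCK := hdec.subset_of_mem hC
  obtain ⟨C', hC', hxC⟩ := hdec.exists_mem_superset ((hdec.2.1 C hC).translate hxA)
    (hK.translate_subset hx hCK)
  have hC'K := hdec.subset_of_mem hC'
  obtain ⟨D, hD, hxD⟩ := hdec.exists_mem_superset ((hdec.2.1 C' hC').translate (A.neg_mem hxA))
    (hK.translate_subset (hK.2.2.2 x hx) hC'K)
  have hCD : C = D := hdec.2.2.2 C hC D hD <| calc
    C = A.translate (A.neg x) (A.translate x C) :=
      (A.translate_neg_translate hxA (hCK.trans hK.1)).symm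
    _ ⊆ A.translate (A.neg x) C' := Set.image_mono hxC
    _ ⊆ D := hxD
  refine hxC.antisymm ?_ ▸ hC'
  calc C' = A.translate x (A.translate (A.neg x) C') :=
      (A.translate_translate_neg hxA (hC'K.trans hK.1)).symm
    _ ⊆ A.translate x D := Set.image_mono hxD
    _ = A.translate x C := by rw [hCD]

theorem IsIrredundantDecomp.eq_of_zero_mem [IsAlgClosed k] [Uncountable k]
    (hK : A.IsSubgroupSet K) (hdec : A.IsIrredundantDecomp K 𝒞) {C D : Set (ProjSpace k n)}
    (hC : C ∈ 𝒞) (hD : D ∈ 𝒞) (hC0 : A.zero ∈ C) (hD0 : A.zero ∈ D) : C = D := by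
  have hCK := hdec.subset_of_mem hC
  have hDK := hdec.subset_of_mem hD
  obtain ⟨E, hE, hCDE⟩ := hdec.exists_mem_superset
    (A.image2_add_closed C D (hdec.2.1 C hC) (hdec.2.1 D hD))
    (Set.image2_subset_iff.2 fun c hc d hd => hK.2.2.1 c (hCK hc) d (hDK hd))
  have hCE : C = E := hdec.2.2.2 C hC E hE fun c hc =>
    A.add_zero (hK.1 (hCK hc)) ▸ hCDE (Set.mem_image2_of_mem hc hD0)
  have hDE : D = E := hdec.2.2.2 D hD E hE fun d hd =>
    A.zero_add d (hK.1 (hDK hd)) ▸ hCDE (Set.mem_image2_of_mem hC0 hd)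
  rw [hCE, hDE]

end IrredundantDecomp

end AbelianVariety

theorem statement12_general (k : Type) [Field k] [IsAlgClosed k] [Uncountable k]
    {n : ℕ} (A : AbelianVariety k n) (K : Set (ProjSpace k n))
    (hsub : A.IsSubgroupSet K)
    (𝒞 : Set (Set (ProjSpace k n))) (hdec : A.IsIrredundantDecomp K 𝒞)
    (A₀ : Set (ProjSpace k n)) (hA₀ : A₀ ∈ 𝒞) (h0 : A.zero ∈ A₀) :
    (∀ x ∈ K, ∃ C ∈ 𝒞, A.translate x A₀ = C) ∧
      ∀ C ∈ 𝒞, ∃ x ∈ K, C = A.translate x A₀ := by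
  refine ⟨fun x hx => ⟨_, hdec.translate_mem hsub hx hA₀, rfl⟩, fun C hC => ?_⟩
  obtain ⟨x, hxC⟩ := (hdec.2.1 C hC).2.1
  have hxK := hdec.subset_of_mem hC hxC
  have hxA := hsub.1 hxK
  have hCA := (hdec.subset_of_mem hC).trans hsub.1
  have hC₀ : A.translate (A.neg x) C = A₀ :=
    hdec.eq_of_zero_mem hsub (hdec.translate_mem hsub (hsub.2.2.2 x hxK) hC) hA₀
      ⟨x, hxC, A.neg_add_cancel x hxA⟩ h0
  exact ⟨x, hxK, by rw [← hC₀, A.translate_translate_neg hxA hCA]⟩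

/-- Every c-component of a c-closed subgroup `K` of an abelian variety over an
uncountable algebraically closed field is a translate of the component `A₀`
through `0`: for every `x ∈ K` the translate `x + A₀` is a member of the
irredundant decomposition of `K`, and conversely every member is such a
translate. -/
theorem statement12 (k : Type) [Field k] [IsAlgClosed k] [Uncountable k]
    {n : ℕ} (A : AbelianVariety k n) (K : Set (ProjSpace k n))
    (hsub : A.IsSubgroupSet K) (hcc : A.IsCClosed K)
    (𝒞 : Set (Set (ProjSpace k n))) (hdec : A.IsIrredundantDecomp K 𝒞)
    (A₀ : Set (ProjSpace k n)) (hA₀ : A₀ ∈ 𝒞) (h0 : A.zero ∈ A₀) :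
    (∀ x ∈ K, ∃ C ∈ 𝒞, A.translate x A₀ = C) ∧
      ∀ C ∈ 𝒞, ∃ x ∈ K, C = A.translate x A₀ :=
  statement12_general k A K hsub 𝒞 hdec A₀ hA₀ h0
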